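/- For a function f on a locally finite weighted graph and the heat semigroup P_t, the function s ↦ P_s((P_{t-s}f)²) (for 0 ≤ s ≤ t) has derivative 2 P_s(Γ(P_{t-s}f)); consequently P_t(f²) - (P_t f)² = 2∫₀ᵗ P_s(Γ(P_{t-s}f)) ds ≥ 0 (variance representation). -/

import Mathlib

open Real ENNReal

structure WGraph (V : Type*) where
  w : V → V → ℝ
  m : V → ℝ
  symm : ∀ x y, w x y = w y x
  nonneg : ∀ x y, 0 ≤ w x y
  loopless : ∀ x, w x x = 0
  mpos : ∀ x, 0 < m x
  locFin : ∀ x, (Function.support (w x)).Finite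

namespace WGraph

variable {V : Type*} (G : WGraph V)

/-- transition weights -/
noncomputable def q (x y : V) : ℝ := G.w x y / G.m x

/-- the graph Laplacian `Δ` -/
noncomputable def lap (f : V → ℝ) (x : V) : ℝ := ∑' y, G.q x y * (f y - f x)

/-- the weighted vertex degree -/
noncomputable def deg (x : V) : ℝ := ∑' y, G.q x y

/-- the bilinear carré du champ operator `Γ(f,g)` -/
noncomputable def gammaB (f g : V → ℝ) (x : V) : ℝ :=
  (1 / 2) * (G.lap (f * g) x - f x * G.lap g x - g x * G.lap f x)

/-- the carré du champ operator `Γ f` -/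
noncomputable def gamma (f : V → ℝ) : V → ℝ := G.gammaB f f

/-- the iterated carré du champ operator `Γ₂ f` -/
noncomputable def gamma2 (f : V → ℝ) (x : V) : ℝ :=
  (1 / 2) * G.lap (G.gamma f) x - G.gammaB f (G.lap f) x

/-- boundedness of a function -/
def Bdd (f : V → ℝ) : Prop := ∃ C, ∀ x, |f x| ≤ C

/-- the variable curvature dimension condition `CD(ρ,n)` -/
def CD (ρ : V → ℝ) (n : ℝ≥0∞) : Prop :=
  ∀ f, Bdd f → ∀ x, ρ x * G.gamma f x + (n⁻¹).toReal * (G.lap f x) ^ 2 ≤ G.gamma2 f x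

/-- the underlying simple graph (for the combinatorial metric) -/
def toSimpleGraph : SimpleGraph V where
  Adj x y := 0 < G.w x y
  symm := ⟨fun x y (h : 0 < G.w x y) => by rwa [G.symm] at h⟩
  loopless := ⟨fun x (h : 0 < G.w x x) => by rw [G.loopless] at h; exact lt_irrefl 0 h⟩

/-- `P` is the semigroup `e^{-t(L+W)}` generated by `-(L+W) = Δ - W`. -/
def IsSemigroup (W : V → ℝ) (P : ℝ → (V → ℝ) → V → ℝ) : Prop :=
  (∀ f, P 0 f = f) ∧
  (∀ s t, 0 ≤ s → 0 ≤ t → ∀ f, P (s + t) f = P s (P t f)) ∧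
  (∀ t f g, P t (f + g) = P t f + P t g) ∧
  (∀ t (c : ℝ) f, P t (c • f) = c • P t f) ∧
  (∀ f, Bdd f → ∀ t, 0 ≤ t → Bdd (P t f)) ∧
  (∀ f, Bdd f → ∀ x, ContinuousOn (fun s => P s f x) (Set.Ici 0)) ∧
  (∀ f, Bdd f → ∀ x t, 0 < t →
    HasDerivAt (fun s => P s f x) (G.lap (P t f) x - W x * P t f x) t) ∧
  (∀ f, Bdd f → (∀ x, 0 ≤ f x) → ∀ t, 0 ≤ t → ∀ x, 0 ≤ P t f x)

end WGraph

namespace WGraph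

variable {V : Type*} (G : WGraph V)

noncomputable def nbr (x : V) : Finset V := (G.locFin x).toFinset

lemma q_nonneg (x y : V) : 0 ≤ G.q x y := div_nonneg (G.nonneg x y) (G.mpos x).le

lemma q_eq_zero {x y : V} (h : y ∉ G.nbr x) : G.q x y = 0 := by
  have : G.w x y = 0 := by
    by_contra hw
    exact h ((G.locFin x).mem_toFinset.mpr hw)
  simp [q, this]

lemma lap_eq_sum (g : V → ℝ) (x : V) :
    G.lap g x = ∑ y ∈ G.nbr x, G.q x y * (g y - g x) := by
  apply tsum_eq_sum
  intro b hb
  simp [G.q_eq_zero hb]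

lemma deg_eq_sum (x : V) : G.deg x = ∑ y ∈ G.nbr x, G.q x y := by
  apply tsum_eq_sum
  intro b hb
  exact G.q_eq_zero hb

lemma deg_nonneg (x : V) : 0 ≤ G.deg x := by
  rw [deg_eq_sum]
  exact Finset.sum_nonneg fun y _ => G.q_nonneg x y

lemma lap_abs_le {D : ℝ} (hD : ∀ y, G.deg y ≤ D) {g : V → ℝ} {C : ℝ}
    (hg : ∀ z, |g z| ≤ C) (y : V) : |G.lap g y| ≤ 2 * D * C := by
  have hC : 0 ≤ C := (abs_nonneg _).trans (hg y)
  rw [lap_eq_sum]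
  calc |∑ z ∈ G.nbr y, G.q y z * (g z - g y)|
      ≤ ∑ z ∈ G.nbr y, |G.q y z * (g z - g y)| := Finset.abs_sum_le_sum_abs _ _
    _ ≤ ∑ z ∈ G.nbr y, G.q y z * (2 * C) := by
        apply Finset.sum_le_sum
        intro z _
        rw [abs_mul, abs_of_nonneg (G.q_nonneg y z)]
        apply mul_le_mul_of_nonneg_left _ (G.q_nonneg y z)
        calc |g z - g y| ≤ |g z| + |g y| := abs_sub _ _
          _ ≤ 2 * C := by have := hg z; have := hg y; linarith
    _ = G.deg y * (2 * C) := by rw [deg_eq_sum, Finset.sum_mul]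
    _ ≤ D * (2 * C) := mul_le_mul_of_nonneg_right (hD y) (by linarith)
    _ = 2 * D * C := by ring

lemma lap_sub (a b : V → ℝ) (x : V) :
    G.lap (fun y => a y - b y) x = G.lap a x - G.lap b x := by
  rw [lap_eq_sum, lap_eq_sum, lap_eq_sum, ← Finset.sum_sub_distrib]
  exact Finset.sum_congr rfl fun y _ => by ring

lemma gamma_eq_sum (g : V → ℝ) (x : V) :
    G.gamma g x = (1 / 2) * ∑ y ∈ G.nbr x, G.q x y * (g y - g x) ^ 2 := by
  unfold gamma gammaB
  rw [lap_eq_sum, lap_eq_sum]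
  rw [Finset.mul_sum]
  rw [← Finset.sum_sub_distrib, ← Finset.sum_sub_distrib]
  congr 1
  apply Finset.sum_congr rfl
  intro y _
  simp only [Pi.mul_apply]
  ring

lemma gamma_nonneg (g : V → ℝ) (x : V) : 0 ≤ G.gamma g x := by
  rw [gamma_eq_sum]
  apply mul_nonneg (by norm_num)
  exact Finset.sum_nonneg fun y _ => mul_nonneg (G.q_nonneg x y) (sq_nonneg _)

lemma bdd_one : Bdd (fun _ : V => (1 : ℝ)) := ⟨1, fun _ => by simp⟩

lemma bdd_mul {a b : V → ℝ} (ha : Bdd a) (hb : Bdd b) : Bdd (a * b) := by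
  obtain ⟨Ca, ha⟩ := ha
  obtain ⟨Cb, hb⟩ := hb
  refine ⟨|Ca| * |Cb|, fun y => ?_⟩
  rw [Pi.mul_apply, abs_mul]
  exact mul_le_mul ((ha y).trans (le_abs_self _)) ((hb y).trans (le_abs_self _))
    (abs_nonneg _) (abs_nonneg _)

lemma bdd_sub {a b : V → ℝ} (ha : Bdd a) (hb : Bdd b) : Bdd (fun y => a y - b y) := by
  obtain ⟨Ca, ha⟩ := ha
  obtain ⟨Cb, hb⟩ := hb
  refine ⟨Ca + Cb, fun y => ?_⟩
  calc |a y - b y| ≤ |a y| + |b y| := abs_sub _ _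
    _ ≤ Ca + Cb := add_le_add (ha y) (hb y)

lemma bdd_lap {D : ℝ} (hD : ∀ y, G.deg y ≤ D) {g : V → ℝ} (hg : Bdd g) : Bdd (G.lap g) := by
  obtain ⟨C, hC⟩ := hg
  exact ⟨2 * D * C, fun y => G.lap_abs_le hD hC y⟩

lemma bdd_gamma {D : ℝ} (hD : ∀ y, G.deg y ≤ D) {g : V → ℝ} (hg : Bdd g) :
    Bdd (G.gamma g) := by
  obtain ⟨C1, h1⟩ := G.bdd_lap hD (bdd_mul hg hg)
  obtain ⟨C2, h2⟩ := bdd_mul hg (G.bdd_lap hD hg)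
  refine ⟨(1 / 2) * (C1 + C2 + C2), fun y => ?_⟩
  unfold gamma gammaB
  rw [abs_mul, abs_of_nonneg (by norm_num : (0:ℝ) ≤ 1/2)]
  apply mul_le_mul_of_nonneg_left _ (by norm_num)
  have h2' := h2 y
  rw [Pi.mul_apply] at h2'
  calc |G.lap (g * g) y - g y * G.lap g y - g y * G.lap g y|
      ≤ |G.lap (g * g) y - g y * G.lap g y| + |g y * G.lap g y| := abs_sub _ _
    _ ≤ |G.lap (g * g) y| + |g y * G.lap g y| + |g y * G.lap g y| := by
        have := abs_sub (G.lap (g * g) y) (g y * G.lap g y)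
        linarith [abs_mul (g y) (G.lap g y)]
    _ ≤ C1 + C2 + C2 := by
        have := abs_mul (g y) (G.lap g y)
        have h1' := h1 y
        nlinarith [abs_nonneg (g y * G.lap g y)]


lemma gamma_abs_le {D : ℝ} (hD : ∀ y, G.deg y ≤ D) {g : V → ℝ} {C : ℝ}
    (hg : ∀ z, |g z| ≤ C) (z : V) : |G.gamma g z| ≤ 3 * D * C ^ 2 := by
  have h1 : ∀ w, |(g * g) w| ≤ C * C := by
    intro w
    rw [Pi.mul_apply, abs_mul]
    exact mul_le_mul (hg w) (hg w) (abs_nonneg _) ((abs_nonneg _).trans (hg w))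
  have h2 : |G.lap (g * g) z| ≤ 2 * D * (C * C) := G.lap_abs_le hD h1 z
  have h3 : |G.lap g z| ≤ 2 * D * C := G.lap_abs_le hD hg z
  have h4 : |g z * G.lap g z| ≤ C * (2 * D * C) := by
    rw [abs_mul]
    exact mul_le_mul (hg z) h3 (abs_nonneg _) ((abs_nonneg _).trans (hg z))
  unfold gamma gammaB
  have h5 : |G.lap (g * g) z - g z * G.lap g z - g z * G.lap g z|
      ≤ |G.lap (g * g) z| + |g z * G.lap g z| + |g z * G.lap g z| := by
    have := abs_sub (G.lap (g * g) z - g z * G.lap g z) (g z * G.lap g z)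
    have := abs_sub (G.lap (g * g) z) (g z * G.lap g z)
    linarith
  rw [abs_mul, abs_of_nonneg (by norm_num : (0:ℝ) ≤ 1/2)]
  nlinarith [abs_nonneg (G.lap (g * g) z - g z * G.lap g z - g z * G.lap g z)]

lemma gamma_diff_le {D : ℝ} (hD : ∀ y, G.deg y ≤ D) {u v : V → ℝ} {C L : ℝ}
    (hu : ∀ z, |u z| ≤ C) (hv : ∀ z, |v z| ≤ C) (huv : ∀ z, |u z - v z| ≤ L) (z : V) :
    |G.gamma u z - G.gamma v z| ≤ 6 * D * C * L := by
  have hD0 : 0 ≤ D := (G.deg_nonneg z).trans (hD z)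
  have hC0 : 0 ≤ C := (abs_nonneg _).trans (hu z)
  have hL0 : 0 ≤ L := (abs_nonneg _).trans (huv z)
  have hsq : ∀ w, |(u * u) w - (v * v) w| ≤ 2 * C * L := by
    intro w
    have : (u * u) w - (v * v) w = (u w - v w) * (u w + v w) := by
      simp only [Pi.mul_apply]; ring
    rw [this, abs_mul]
    have h6 : |u w + v w| ≤ 2 * C := by
      have := abs_add_le (u w) (v w)
      have := hu w; have := hv w
      linarith
    calc |u w - v w| * |u w + v w| ≤ L * (2 * C) :=
          mul_le_mul (huv w) h6 (abs_nonneg _) hL0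
      _ = 2 * C * L := by ring
  have h7 : |G.lap (u * u) z - G.lap (v * v) z| ≤ 2 * D * (2 * C * L) := by
    have heq : G.lap (u * u) z - G.lap (v * v) z
        = G.lap (fun w => (u * u) w - (v * v) w) z := (G.lap_sub _ _ z).symm
    rw [heq]
    exact G.lap_abs_le hD hsq z
  have h8 : |G.lap (fun w => u w - v w) z| ≤ 2 * D * L := G.lap_abs_le hD huv z
  have h9 : |G.lap u z - G.lap v z| ≤ 2 * D * L := by
    rw [← G.lap_sub]; exact h8
  have h10 : |u z * G.lap u z - v z * G.lap v z| ≤ L * (2 * D * C) + C * (2 * D * L) := by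
    have hid : u z * G.lap u z - v z * G.lap v z
        = (u z - v z) * G.lap u z + v z * (G.lap u z - G.lap v z) := by ring
    rw [hid]
    have t1 : |(u z - v z) * G.lap u z| ≤ L * (2 * D * C) := by
      rw [abs_mul]
      exact mul_le_mul (huv z) (G.lap_abs_le hD hu z) (abs_nonneg _) hL0
    have t2 : |v z * (G.lap u z - G.lap v z)| ≤ C * (2 * D * L) := by
      rw [abs_mul]
      exact mul_le_mul (hv z) h9 (abs_nonneg _) hC0
    have := abs_add_le ((u z - v z) * G.lap u z) (v z * (G.lap u z - G.lap v z))
    linarith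
  have hid2 : G.gamma u z - G.gamma v z
      = (1/2) * (G.lap (u * u) z - G.lap (v * v) z)
        - (u z * G.lap u z - v z * G.lap v z) := by
    unfold gamma gammaB; ring
  rw [hid2]
  have := abs_sub ((1/2) * (G.lap (u * u) z - G.lap (v * v) z))
    (u z * G.lap u z - v z * G.lap v z)
  rw [abs_mul, abs_of_nonneg (by norm_num : (0:ℝ) ≤ 1/2)] at this
  nlinarith

section Semigroup

variable {P : ℝ → (V → ℝ) → V → ℝ}

lemma P_mono (hPadd : ∀ t f g, P t (f + g) = P t f + P t g)
    (hPpos : ∀ f, Bdd f → (∀ x, 0 ≤ f x) → ∀ t, 0 ≤ t → ∀ x, 0 ≤ P t f x)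
    {u : ℝ} (hu : 0 ≤ u) {a b : V → ℝ} (ha : Bdd a) (hb : Bdd b)
    (hab : ∀ y, a y ≤ b y) (y : V) : P u a y ≤ P u b y := by
  have hb' : b = a + (fun z => b z - a z) := by funext z; simp
  have h0 : 0 ≤ P u (fun z => b z - a z) y :=
    hPpos _ (bdd_sub hb ha) (fun z => by have := hab z; simp only [sub_nonneg]; linarith) u hu y
  have key : P u b y = P u a y + P u (fun z => b z - a z) y := by
    conv_lhs => rw [hb']
    rw [hPadd]; rfl
  linarith

lemma P_abs_le (hPadd : ∀ t f g, P t (f + g) = P t f + P t g)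
    (hPsmul : ∀ t (c : ℝ) f, P t (c • f) = c • P t f)
    (hPpos : ∀ f, Bdd f → (∀ x, 0 ≤ f x) → ∀ t, 0 ≤ t → ∀ x, 0 ≤ P t f x)
    {u : ℝ} (hu : 0 ≤ u) {g : V → ℝ} {C : ℝ} (hg : Bdd g) (hgC : ∀ z, |g z| ≤ C)
    (y : V) : |P u g y| ≤ C * P u (fun _ => 1) y := by
  have hCb : Bdd (C • fun _ : V => (1:ℝ)) := ⟨|C|, fun z => by simp⟩
  have hCb' : Bdd ((-C) • fun _ : V => (1:ℝ)) := ⟨|C|, fun z => by simp⟩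
  have hup : P u g y ≤ P u (C • fun _ => (1:ℝ)) y :=
    P_mono hPadd hPpos hu hg hCb (fun z => by
      simpa using (abs_le.mp (hgC z)).2) y
  have hlo : P u ((-C) • fun _ => (1:ℝ)) y ≤ P u g y :=
    P_mono hPadd hPpos hu hCb' hg (fun z => by
      simpa using (abs_le.mp (hgC z)).1) y
  rw [hPsmul] at hup hlo
  simp only [Pi.smul_apply, smul_eq_mul] at hup hlo
  rw [abs_le]
  constructor <;> linarith

lemma contOn_lapP (hPcont : ∀ f, Bdd f → ∀ x, ContinuousOn (fun s => P s f x) (Set.Ici 0))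
    {g : V → ℝ} (hg : Bdd g) (y : V) :
    ContinuousOn (fun v => G.lap (P v g) y) (Set.Ici 0) := by
  have : (fun v => G.lap (P v g) y)
      = fun v => ∑ z ∈ G.nbr y, G.q y z * (P v g z - P v g y) :=
    funext fun v => G.lap_eq_sum _ y
  rw [this]
  apply continuousOn_finset_sum
  intro z _
  exact continuousOn_const.mul ((hPcont g hg z).sub (hPcont g hg y))

lemma ftc (hPcont : ∀ f, Bdd f → ∀ x, ContinuousOn (fun s => P s f x) (Set.Ici 0))
    (hPderiv : ∀ f, Bdd f → ∀ x t, 0 < t →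
      HasDerivAt (fun s => P s f x) (G.lap (P t f) x - (0:V → ℝ) x * P t f x) t)
    {g : V → ℝ} (hg : Bdd g) (y : V) {a b : ℝ} (h0 : 0 ≤ a) (hab : a ≤ b) :
    P b g y - P a g y = ∫ v in a..b, G.lap (P v g) y := by
  refine (intervalIntegral.integral_eq_sub_of_hasDeriv_right_of_le (f := fun s => P s g y)
      (f' := fun v => G.lap (P v g) y) hab ?_ ?_ ?_).symm
  · exact (hPcont g hg y).mono (fun v hv => h0.trans hv.1)
  · intro v hv
    have h := hPderiv g hg y v (h0.trans_lt hv.1)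
    simp only [Pi.zero_apply, zero_mul, sub_zero] at h
    exact h.hasDerivWithinAt
  · apply ContinuousOn.intervalIntegrable
    apply (G.contOn_lapP hPcont hg y).mono
    rw [Set.uIcc_of_le hab]
    exact fun v hv => h0.trans hv.1


open MeasureTheory in
lemma stein (hP : ∀ f, Bdd f → ∀ t, 0 ≤ t → Bdd (P t f))
    (hPcont : ∀ f, Bdd f → ∀ x, ContinuousOn (fun s => P s f x) (Set.Ici 0))
    (hPsg : ∀ s t, 0 ≤ s → 0 ≤ t → ∀ f, P (s + t) f = P s (P t f))
    (hPadd : ∀ t f g, P t (f + g) = P t f + P t g)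
    (hPsmul : ∀ t (c : ℝ) f, P t (c • f) = c • P t f)
    (hPpos : ∀ f, Bdd f → (∀ x, 0 ≤ f x) → ∀ t, 0 ≤ t → ∀ x, 0 ≤ P t f x)
    (x : V) {T a : ℝ} (hT : 0 < T) (ha : 0 < a) (haT : a ≤ T) :
    ∃ K, 0 ≤ K ∧ ∀ r ∈ Set.Icc a T, ∀ y, P r (fun _ => (1:ℝ)) y ≤ K := by
  classical
  set one : V → ℝ := fun _ => 1 with hone_def
  have hone : Bdd one := ⟨1, fun _ => by simp [hone_def]⟩
  set A : ℕ → Set ℝ := fun N => ⋂ y : V, {v | v ∈ Set.Icc (0:ℝ) T ∧ P v one y ≤ N} with hA_def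
  have hAmeas : ∀ N, MeasurableSet (A N) := by
    intro N
    apply IsClosed.measurableSet
    apply isClosed_iInter
    intro y
    have : {v | v ∈ Set.Icc (0:ℝ) T ∧ P v one y ≤ N}
        = Set.Icc (0:ℝ) T ∩ (fun v => P v one y) ⁻¹' Set.Iic (N:ℝ) := by
      ext v; simp [Set.mem_Icc, Set.mem_Iic, and_assoc]
    rw [this]
    exact (ContinuousOn.preimage_isClosed_of_isClosed
      ((hPcont one hone y).mono (fun v hv => hv.1)) isClosed_Icc isClosed_Iic)
  have hAsub : ∀ N, A N ⊆ Set.Icc (0:ℝ) T := by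
    intro N v hv
    exact (Set.mem_iInter.mp hv x).1
  have hAmem : ∀ N v, v ∈ A N ↔ (v ∈ Set.Icc (0:ℝ) T ∧ ∀ y, P v one y ≤ N) := by
    intro N v
    constructor
    · intro hv
      exact ⟨(Set.mem_iInter.mp hv x).1, fun y => (Set.mem_iInter.mp hv y).2⟩
    · intro ⟨h1, h2⟩
      exact Set.mem_iInter.mpr fun y => ⟨h1, h2 y⟩
  have hAmono : Monotone A := by
    intro N M hNM v hv
    rw [hAmem] at hv ⊢
    exact ⟨hv.1, fun y => (hv.2 y).trans (by exact_mod_cast Nat.cast_le.mpr hNM)⟩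
  have hcover : Set.Icc (0:ℝ) T ⊆ ⋃ N, A N := by
    intro v hv
    obtain ⟨C, hC⟩ := hP one hone v hv.1
    obtain ⟨N, hN⟩ := exists_nat_ge C
    exact Set.mem_iUnion.mpr ⟨N, (hAmem N v).mpr
      ⟨hv, fun y => ((le_abs_self _).trans (hC y)).trans hN⟩⟩
  set B : ℕ → Set ℝ := fun N => Set.Icc (0:ℝ) T \ A N with hB_def
  have hBmeas : ∀ N, MeasurableSet (B N) := fun N => measurableSet_Icc.diff (hAmeas N)
  have hBempty : ⋂ N, B N = ∅ := by
    rw [Set.eq_empty_iff_forall_notMem]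
    intro v hv
    have h0 := Set.mem_iInter.mp hv 0
    obtain ⟨N, hN⟩ := Set.mem_iUnion.mp (hcover h0.1)
    exact (Set.mem_iInter.mp hv N).2 hN
  have hBtend : Filter.Tendsto (fun N => volume (B N)) Filter.atTop (nhds 0) := by
    have := tendsto_measure_iInter_atTop (μ := volume)
      (fun N => (hBmeas N).nullMeasurableSet)
      (fun N M hNM => Set.diff_subset_diff_right (hAmono hNM))
      ⟨0, ((measure_mono Set.diff_subset).trans_lt (by
        rw [Real.volume_Icc]; exact ENNReal.ofReal_lt_top)).ne⟩
    rw [hBempty] at this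
    exact (by simpa using this : Filter.Tendsto (⇑(volume : Measure ℝ) ∘ B) Filter.atTop (nhds 0))
  obtain ⟨N, hN⟩ := (hBtend.eventually_lt_const
    (ENNReal.ofReal_pos.mpr (half_pos ha))).exists
  refine ⟨(N:ℝ) * N, mul_nonneg (Nat.cast_nonneg N) (Nat.cast_nonneg N), ?_⟩
  intro r hr y
  have hr0 : 0 < r := ha.trans_le hr.1
  set X : Set ℝ := A N ∩ Set.Icc 0 r with hX_def
  set Y : Set ℝ := (fun v => r - v) ⁻¹' X with hY_def
  have hXm : MeasurableSet X := (hAmeas N).inter measurableSet_Icc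
  have hIccrT : Set.Icc (0:ℝ) r ⊆ Set.Icc (0:ℝ) T :=
    Set.Icc_subset_Icc le_rfl (hr.2)
  have hXc : Set.Icc (0:ℝ) r \ X ⊆ B N := by
    intro v hv
    refine ⟨hIccrT hv.1, fun hvA => hv.2 ⟨hvA, hv.1⟩⟩
  have hYc : Set.Icc (0:ℝ) r \ Y ⊆ (fun v => r - v) ⁻¹' (B N) := by
    intro v hv
    have hrv : r - v ∈ Set.Icc (0:ℝ) r := by
      constructor
      · linarith [hv.1.2]
      · linarith [hv.1.1]
    refine ⟨hIccrT hrv, fun hvA => hv.2 ?_⟩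
    exact ⟨hvA, hrv⟩
  have hmp : MeasurePreserving (fun v : ℝ => r - v) volume volume :=
    Measure.measurePreserving_sub_left volume r
  have hμX : volume (Set.Icc (0:ℝ) r \ X) < ENNReal.ofReal (a / 2) :=
    (measure_mono hXc).trans_lt hN
  have hμY : volume (Set.Icc (0:ℝ) r \ Y) < ENNReal.ofReal (a / 2) := by
    refine (measure_mono hYc).trans_lt ?_
    rw [hmp.measure_preimage (hBmeas N).nullMeasurableSet]
    exact hN
  have hXY : (X ∩ Y).Nonempty := by
    by_contra hemp
    rw [Set.not_nonempty_iff_eq_empty] at hemp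
    have hsub2 : Set.Icc (0:ℝ) r ⊆ (Set.Icc (0:ℝ) r \ X) ∪ (Set.Icc (0:ℝ) r \ Y) := by
      intro v hv
      by_cases hvX : v ∈ X
      · right
        refine ⟨hv, fun hvY => ?_⟩
        have : v ∈ X ∩ Y := ⟨hvX, hvY⟩
        rw [hemp] at this
        exact this
      · exact Or.inl ⟨hv, hvX⟩
    have h1 : volume (Set.Icc (0:ℝ) r) < ENNReal.ofReal (a/2) + ENNReal.ofReal (a/2) :=
      ((measure_mono hsub2).trans (measure_union_le _ _)).trans_lt
        (ENNReal.add_lt_add hμX hμY)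
    rw [Real.volume_Icc, ← ENNReal.ofReal_add (by linarith) (by linarith)] at h1
    rw [ENNReal.ofReal_lt_ofReal_iff (by linarith)] at h1
    linarith [hr.1]
  obtain ⟨v, hvX, hvY⟩ := hXY
  have hvA := (hAmem N v).mp hvX.1
  have hrvA := (hAmem N (r - v)).mp hvY.1
  have hv0 : 0 ≤ v := hvX.2.1
  have hrv0 : 0 ≤ r - v := hrvA.1.1
  have hsplit : P r one = P v (P (r - v) one) := by
    have := hPsg v (r - v) hv0 hrv0 one
    rwa [add_sub_cancel] at this
  have hPrv : Bdd (P (r - v) one) := hP one hone _ hrv0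
  have hNone : Bdd ((N:ℝ) • one) := ⟨(N:ℝ), fun z => by
    simp [hone_def, Nat.abs_cast]⟩
  have hmono := P_mono hPadd hPpos hv0 hPrv hNone
    (fun z => by simpa [hone_def] using hrvA.2 z) y
  rw [hPsmul] at hmono
  simp only [Pi.smul_apply, smul_eq_mul] at hmono
  rw [hsplit]
  calc P v (P (r - v) one) y ≤ (N:ℝ) * P v one y := hmono
    _ ≤ (N:ℝ) * N := mul_le_mul_of_nonneg_left (hvA.2 y) (Nat.cast_nonneg N)

open MeasureTheory in
lemma unif_bound {D : ℝ} (hD : ∀ y, G.deg y ≤ D)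
    (hP0 : ∀ f, P 0 f = f)
    (hPsg : ∀ s t, 0 ≤ s → 0 ≤ t → ∀ f, P (s + t) f = P s (P t f))
    (hPadd : ∀ t f g, P t (f + g) = P t f + P t g)
    (hPsmul : ∀ t (c : ℝ) f, P t (c • f) = c • P t f)
    (hPbdd : ∀ f, Bdd f → ∀ t, 0 ≤ t → Bdd (P t f))
    (hPcont : ∀ f, Bdd f → ∀ x, ContinuousOn (fun s => P s f x) (Set.Ici 0))
    (hPderiv : ∀ f, Bdd f → ∀ x t, 0 < t →
      HasDerivAt (fun s => P s f x) (G.lap (P t f) x - (0:V → ℝ) x * P t f x) t)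
    (hPpos : ∀ f, Bdd f → (∀ x, 0 ≤ f x) → ∀ t, 0 ≤ t → ∀ x, 0 ≤ P t f x)
    (x : V) {T : ℝ} (hT : 0 ≤ T) :
    ∃ M, 1 ≤ M ∧ ∀ v ∈ Set.Icc 0 T, ∀ y, P v (fun _ => (1:ℝ)) y ≤ M := by
  set one : V → ℝ := fun _ => 1 with hone_def
  have hone : Bdd one := ⟨1, fun _ => by simp [hone_def]⟩
  rcases eq_or_lt_of_le hT with hT0 | hTpos
  · refine ⟨1, le_rfl, fun v hv y => ?_⟩
    have : v = 0 := le_antisymm (hv.2.trans hT0.symm.le) hv.1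
    rw [this, hP0]
  have hD0 : 0 ≤ D := (G.deg_nonneg x).trans (hD x)
  set δ : ℝ := min T (1 / (8 * (D + 1))) with hδ_def
  have hδpos : 0 < δ := lt_min hTpos (by positivity)
  have hδT : δ ≤ T := min_le_left _ _
  have hδsmall : 2 * D * δ ≤ 1 / 4 := by
    have h1 : δ ≤ 1 / (8 * (D + 1)) := min_le_right _ _
    have h2 : 2 * D * δ ≤ 2 * D * (1 / (8 * (D + 1))) :=
      mul_le_mul_of_nonneg_left h1 (by linarith)
    have h3 : 2 * D * (1 / (8 * (D + 1))) ≤ 1 / 4 := by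
      rw [mul_one_div, div_le_div_iff₀ (by positivity) (by norm_num)]
      nlinarith
    linarith
  obtain ⟨Kδ, hKδ0, hKδ⟩ := stein hPbdd hPcont hPsg hPadd hPsmul hPpos x hTpos hδpos hδT
  have hgoal : ∀ r, 0 < r → r ≤ δ → ∀ y, P r one y ≤ 2 * Kδ := by
    intro a ha haδ
    obtain ⟨Ka, _, hKa⟩ := stein hPbdd hPcont hPsg hPadd hPsmul hPpos x hδpos ha haδ
    set Z : Set ℝ := {z | ∃ r, r ∈ Set.Icc a δ ∧ ∃ y, P r one y = z} with hZ_def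
    have hZne : Z.Nonempty := ⟨P a one x, a, ⟨le_refl a, haδ⟩, x, rfl⟩
    have hZbdd : BddAbove Z := by
      refine ⟨Ka, ?_⟩
      rintro z ⟨r, hr, y, rfl⟩
      exact hKa r hr y
    set S : ℝ := sSup Z with hS_def
    have hle : ∀ r ∈ Set.Icc a δ, ∀ y, P r one y ≤ S := by
      intro r hr y
      exact le_csSup hZbdd ⟨r, hr, y, rfl⟩
    have hS0 : 0 ≤ S :=
      (hPpos one hone (fun _ => by simp [hone_def]) a ha.le x).trans
        (hle a ⟨le_refl a, haδ⟩ x)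
    have hbound : ∀ r ∈ Set.Icc a δ, ∀ y, P r one y ≤ Kδ + S / 4 := by
      intro r hr y
      have hftc := G.ftc hPcont hPderiv hone y (ha.le.trans hr.1) hr.2
      have hint : |∫ v in r..δ, G.lap (P v one) y| ≤ 2 * D * S * |δ - r| := by
        rw [← Real.norm_eq_abs]
        apply intervalIntegral.norm_integral_le_of_norm_le_const
        intro v hv
        rw [Real.norm_eq_abs]
        rw [Set.uIoc_of_le hr.2] at hv
        have hv1 : v ∈ Set.Icc a δ := ⟨hr.1.trans hv.1.le, hv.2⟩
        apply G.lap_abs_le hD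
        intro z
        rw [abs_of_nonneg (hPpos one hone (fun _ => by simp [hone_def]) v
          (ha.le.trans hv1.1) z)]
        exact hle v hv1 z
      have habs : |δ - r| ≤ δ := by
        rw [abs_of_nonneg (by linarith [hr.2])]
        linarith [hr.1, ha.le]
      have h2 : 2 * D * S * |δ - r| ≤ S / 4 := by
        calc 2 * D * S * |δ - r| ≤ 2 * D * S * δ := by
              apply mul_le_mul_of_nonneg_left habs (by positivity)
          _ = (2 * D * δ) * S := by ring
          _ ≤ (1/4) * S := mul_le_mul_of_nonneg_right hδsmall hS0
          _ = S / 4 := by ring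
      have hKδy : P δ one y ≤ Kδ := hKδ δ ⟨le_refl δ, hδT⟩ y
      have heq : P r one y = P δ one y - ∫ v in r..δ, G.lap (P v one) y := by
        linarith [hftc]
      rw [heq]
      have hlow : -(S/4) ≤ ∫ v in r..δ, G.lap (P v one) y := by
        have := (abs_le.mp (hint.trans h2)).1
        linarith
      linarith
    have hSle : S ≤ Kδ + S / 4 := by
      apply csSup_le hZne
      rintro z ⟨r, hr, y, rfl⟩
      exact hbound r hr y
    have hS2 : S ≤ 2 * Kδ := by linarith
    intro y
    exact (hle a ⟨le_refl a, haδ⟩ y).trans hS2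
  refine ⟨2 * Kδ + Kδ + 1, by linarith, ?_⟩
  intro v hv y
  rcases eq_or_lt_of_le hv.1 with hv0 | hvpos
  · rw [← hv0, hP0]; simp [hone_def]; linarith
  rcases le_or_gt v δ with hvδ | hvδ
  · have := hgoal v hvpos hvδ y
    linarith
  · have := hKδ v ⟨hvδ.le, hv.2⟩ y
    linarith

lemma hasDerivWithinAt_of_sq {Φ : ℝ → ℝ} {d s₀ C : ℝ} {S : Set ℝ}
    (h : ∀ s ∈ S, |Φ s - Φ s₀ - (s - s₀) * d| ≤ C * (s - s₀) ^ 2) :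
    HasDerivWithinAt Φ d S s₀ := by
  rw [hasDerivWithinAt_iff_isLittleO, Asymptotics.isLittleO_iff]
  intro c hc
  have h2 : ∀ᶠ s in nhdsWithin s₀ S, |s - s₀| < c / (|C| + 1) := by
    apply Filter.Eventually.filter_mono nhdsWithin_le_nhds
    have : 0 < c / (|C| + 1) := by positivity
    exact eventually_abs_sub_lt s₀ this
  filter_upwards [h2, self_mem_nhdsWithin] with s hs1 hs2
  simp only [smul_eq_mul, Real.norm_eq_abs]
  have hC : 0 ≤ |C| := abs_nonneg C
  calc |Φ s - Φ s₀ - (s - s₀) * d| ≤ C * (s - s₀) ^ 2 := h s hs2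
    _ ≤ (|C| + 1) * (|s - s₀| * |s - s₀|) := by
        rw [abs_mul_abs_self]
        nlinarith [sq_nonneg (s - s₀), le_abs_self C]
    _ ≤ (|C| + 1) * ((c / (|C| + 1)) * |s - s₀|) := by
        apply mul_le_mul_of_nonneg_left _ (by positivity)
        exact mul_le_mul_of_nonneg_right hs1.le (abs_nonneg _)
    _ = c * |s - s₀| := by field_simp
    _ ≤ c * |s - s₀| := le_rfl

lemma P_abs_le_const (hPadd : ∀ t f g, P t (f + g) = P t f + P t g)
    (hPsmul : ∀ t (c : ℝ) f, P t (c • f) = c • P t f)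
    (hPpos : ∀ f, Bdd f → (∀ x, 0 ≤ f x) → ∀ t, 0 ≤ t → ∀ x, 0 ≤ P t f x)
    {u M C : ℝ} (hu : 0 ≤ u) (hM : ∀ y, P u (fun _ => (1:ℝ)) y ≤ M)
    {g : V → ℝ} (hg : Bdd g) (hgC : ∀ z, |g z| ≤ C) (y : V) : |P u g y| ≤ C * M := by
  have h1 := P_abs_le hPadd hPsmul hPpos hu hg hgC y
  have hC : 0 ≤ C := (abs_nonneg _).trans (hgC y)
  exact h1.trans (mul_le_mul_of_nonneg_left (hM y) hC)

lemma P_lip (hP : G.IsSemigroup 0 P) {T M : ℝ} (hT : 0 ≤ T)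
    (hM : ∀ v ∈ Set.Icc 0 T, ∀ y, P v (fun _ => (1:ℝ)) y ≤ M)
    {D : ℝ} (hD : ∀ y, G.deg y ≤ D)
    {g : V → ℝ} {C : ℝ} (hg : Bdd g) (hgC : ∀ z, |g z| ≤ C) :
    ∃ L, 0 ≤ L ∧ ∀ a ∈ Set.Icc 0 T, ∀ b ∈ Set.Icc 0 T, ∀ y,
      |P b g y - P a g y| ≤ L * |b - a| := by
  obtain ⟨hP0, hPsg, hPadd, hPsmul, hPbdd, hPcont, hPderiv, hPpos⟩ := hP
  have key : ∀ a ∈ Set.Icc (0:ℝ) T, ∀ b ∈ Set.Icc (0:ℝ) T, a ≤ b → ∀ y,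
      |P b g y - P a g y| ≤ 2 * D * (C * M) * |b - a| := by
    intro a ha b hb hab y
    rw [G.ftc hPcont hPderiv hg y ha.1 hab, ← Real.norm_eq_abs]
    apply intervalIntegral.norm_integral_le_of_norm_le_const
    intro v hv
    rw [Set.uIoc_of_le hab] at hv
    rw [Real.norm_eq_abs]
    apply G.lap_abs_le hD
    intro z
    exact P_abs_le_const hPadd hPsmul hPpos (ha.1.trans hv.1.le)
      (hM v ⟨ha.1.trans hv.1.le, hv.2.trans hb.2⟩) hg hgC z
  refine ⟨|2 * D * (C * M)|, abs_nonneg _, ?_⟩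
  intro a ha b hb y
  rcases le_total a b with hab | hab
  · exact (key a ha b hb hab y).trans
      (mul_le_mul_of_nonneg_right (le_abs_self _) (abs_nonneg _))
  · rw [abs_sub_comm (P b g y), abs_sub_comm b a]
    exact (key b hb a ha hab y).trans
      (mul_le_mul_of_nonneg_right (le_abs_self _) (abs_nonneg _))

lemma P_taylor (hP : G.IsSemigroup 0 P) {T M : ℝ} (hT : 0 ≤ T)
    (hM : ∀ v ∈ Set.Icc 0 T, ∀ y, P v (fun _ => (1:ℝ)) y ≤ M)
    {D : ℝ} (hD : ∀ y, G.deg y ≤ D)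
    {g : V → ℝ} {C : ℝ} (hg : Bdd g) (hgC : ∀ z, |g z| ≤ C) :
    ∃ K, 0 ≤ K ∧ ∀ a ∈ Set.Icc 0 T, ∀ b ∈ Set.Icc 0 T, ∀ y,
      |P b g y - P a g y - (b - a) * G.lap (P a g) y| ≤ K * (b - a) ^ 2 := by
  obtain ⟨L, hL0, hLip⟩ := G.P_lip hP hT hM hD hg hgC
  obtain ⟨hP0, hPsg, hPadd, hPsmul, hPbdd, hPcont, hPderiv, hPpos⟩ := hP
  have laplip : ∀ a ∈ Set.Icc (0:ℝ) T, ∀ b ∈ Set.Icc (0:ℝ) T, ∀ y,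
      |G.lap (P b g) y - G.lap (P a g) y| ≤ 2 * D * (L * |b - a|) := by
    intro a ha b hb y
    rw [← G.lap_sub]
    apply G.lap_abs_le hD
    intro z
    exact hLip a ha b hb z
  have key : ∀ a ∈ Set.Icc (0:ℝ) T, ∀ b ∈ Set.Icc (0:ℝ) T, a ≤ b → ∀ y,
      |P b g y - P a g y - (b - a) * G.lap (P a g) y|
        ≤ |2 * D * L| * (b - a) ^ 2 := by
    intro a ha b hb hab y
    have h1 : IntervalIntegrable (fun v => G.lap (P v g) y) MeasureTheory.volume a b := by
      apply ContinuousOn.intervalIntegrable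
      apply (G.contOn_lapP hPcont hg y).mono
      rw [Set.uIcc_of_le hab]
      exact fun v hv => ha.1.trans hv.1
    have heq : P b g y - P a g y - (b - a) * G.lap (P a g) y
        = ∫ v in a..b, (G.lap (P v g) y - G.lap (P a g) y) := by
      rw [intervalIntegral.integral_sub h1 intervalIntegrable_const,
        intervalIntegral.integral_const, ← G.ftc hPcont hPderiv hg y ha.1 hab]
      simp [smul_eq_mul]
    rw [heq]
    have hbd : |∫ v in a..b, (G.lap (P v g) y - G.lap (P a g) y)|
        ≤ 2 * D * (L * (b - a)) * |b - a| := by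
      rw [← Real.norm_eq_abs]
      apply intervalIntegral.norm_integral_le_of_norm_le_const
      intro v hv
      rw [Set.uIoc_of_le hab] at hv
      rw [Real.norm_eq_abs]
      have hv' : v ∈ Set.Icc (0:ℝ) T := ⟨ha.1.trans hv.1.le, hv.2.trans hb.2⟩
      refine (laplip a ha v hv' y).trans ?_
      have h3 : |v - a| ≤ b - a := by
        rw [abs_of_nonneg (by linarith [hv.1.le])]
        linarith [hv.2]
      have hD0 : 0 ≤ D := (G.deg_nonneg y).trans (hD y)
      exact mul_le_mul_of_nonneg_left (mul_le_mul_of_nonneg_left h3 hL0) (by linarith)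
    refine hbd.trans ?_
    have habs : |b - a| = b - a := abs_of_nonneg (by linarith)
    rw [habs]
    have h2 : 2 * D * (L * (b - a)) * (b - a) = (2 * D * L) * (b - a) ^ 2 := by ring
    rw [h2]
    exact mul_le_mul_of_nonneg_right (le_abs_self _) (sq_nonneg _)
  refine ⟨|2 * D * L| + |2 * D * L|, by positivity, ?_⟩
  intro a ha b hb y
  rcases le_total a b with hab | hab
  · refine (key a ha b hb hab y).trans ?_
    nlinarith [sq_nonneg (b - a), abs_nonneg (2 * D * L)]
  · have k1 := key b hb a ha hab y
    have k2 := laplip b hb a ha y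
    have hD0 : 0 ≤ D := (G.deg_nonneg y).trans (hD y)
    have hid : P b g y - P a g y - (b - a) * G.lap (P a g) y
        = -(P a g y - P b g y - (a - b) * G.lap (P b g) y)
          + (a - b) * (G.lap (P a g) y - G.lap (P b g) y) := by ring
    rw [hid]
    have htri : |-(P a g y - P b g y - (a - b) * G.lap (P b g) y)
          + (a - b) * (G.lap (P a g) y - G.lap (P b g) y)|
        ≤ |P a g y - P b g y - (a - b) * G.lap (P b g) y|
          + |a - b| * |G.lap (P a g) y - G.lap (P b g) y| := by
      refine (abs_add_le _ _).trans ?_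
      rw [abs_neg, abs_mul]
    refine htri.trans ?_
    have habs : |a - b| = a - b := abs_of_nonneg (by linarith)
    rw [habs] at k2 ⊢
    nlinarith [abs_nonneg (2 * D * L), sq_nonneg (a - b), le_abs_self (2 * D * L),
      mul_nonneg (sub_nonneg.mpr hab) (sub_nonneg.mpr hab)]

lemma P_taylorSG (hP : G.IsSemigroup 0 P) {T M : ℝ} (hT : 0 ≤ T)
    (hM : ∀ v ∈ Set.Icc 0 T, ∀ y, P v (fun _ => (1:ℝ)) y ≤ M)
    {D : ℝ} (hD : ∀ y, G.deg y ≤ D)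
    {g : V → ℝ} {C : ℝ} (hg : Bdd g) (hgC : ∀ z, |g z| ≤ C) :
    ∃ K, 0 ≤ K ∧ ∀ a ∈ Set.Icc 0 T, ∀ b ∈ Set.Icc 0 T, ∀ y,
      |P b g y - P a g y - (b - a) * P a (G.lap g) y| ≤ K * (b - a) ^ 2 := by
  obtain ⟨K1, hK10, hTay⟩ := G.P_taylor hP hT hM hD hg hgC
  have hlapC : ∀ z, |G.lap g z| ≤ 2 * D * C := fun z => G.lap_abs_le hD hgC z
  obtain ⟨L2, hL20, hLip2⟩ := G.P_lip hP hT hM hD (G.bdd_lap hD hg) hlapC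
  obtain ⟨hP0, hPsg, hPadd, hPsmul, hPbdd, hPcont, hPderiv, hPpos⟩ := hP
  obtain ⟨CL, hCL⟩ := G.bdd_lap hD hg
  have key : ∀ a ∈ Set.Icc (0:ℝ) T, ∀ b ∈ Set.Icc (0:ℝ) T, a ≤ b → ∀ y,
      |P b g y - P a g y - (b - a) * P a (G.lap g) y| ≤ |K1 * M| * (b - a) ^ 2 := by
    intro a ha b hb hab y
    set h : ℝ := b - a with hh_def
    have h0 : 0 ≤ h := by linarith
    have hhT : h ≤ T := by have := ha.1; have := hb.2; linarith
    set E : V → ℝ := fun z => P h g z - g z - h * G.lap g z with hE_def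
    have hE : ∀ z, |E z| ≤ K1 * h ^ 2 := by
      intro z
      rw [hE_def]
      have h4 := hTay 0 ⟨le_rfl, hT⟩ h ⟨h0, hhT⟩ z
      rw [hP0] at h4
      simpa using h4
    have hEb : Bdd E := by
      obtain ⟨C1, hC1⟩ := hPbdd g hg h h0
      refine ⟨C1 + C + |h| * CL, fun z => ?_⟩
      have h5 := hCL z
      have h6 := hC1 z
      have h7 := hgC z
      have h8 : |E z| ≤ |P h g z - g z| + |h * G.lap g z| := abs_sub _ _
      have h9 : |P h g z - g z| ≤ |P h g z| + |g z| := abs_sub _ _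
      rw [abs_mul] at h8
      have h10 : |h| * |G.lap g z| ≤ |h| * CL :=
        mul_le_mul_of_nonneg_left (hCL z) (abs_nonneg h)
      linarith
    have hsplit : P b g = P a (P h g) := by
      have := hPsg a h ha.1 h0 g
      have hab2 : a + h = b := by rw [hh_def]; ring
      rwa [hab2] at this
    have hdecomp : P h g = g + ((h • G.lap g) + E) := by
      funext z
      simp only [Pi.add_apply, Pi.smul_apply, smul_eq_mul, hE_def]
      ring
    have heval : P b g y = P a g y + (h * P a (G.lap g) y + P a E y) := by
      rw [hsplit, hdecomp, hPadd, hPadd, hPsmul]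
      simp only [Pi.add_apply, Pi.smul_apply, smul_eq_mul]
    have hPE : |P a E y| ≤ (K1 * h ^ 2) * M :=
      P_abs_le_const hPadd hPsmul hPpos ha.1 (hM a ha) hEb hE y
    have : P b g y - P a g y - (b - a) * P a (G.lap g) y = P a E y := by
      rw [heval]; ring
    rw [this]
    refine hPE.trans ?_
    have : K1 * h ^ 2 * M = (K1 * M) * h ^ 2 := by ring
    rw [this]
    exact mul_le_mul_of_nonneg_right (le_abs_self _) (sq_nonneg _)
  refine ⟨|K1 * M| + L2, by positivity, ?_⟩
  intro a ha b hb y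
  rcases le_total a b with hab | hab
  · refine (key a ha b hb hab y).trans ?_
    nlinarith [sq_nonneg (b - a)]
  · have k1 := key b hb a ha hab y
    have k2 := hLip2 b hb a ha y
    have hid : P b g y - P a g y - (b - a) * P a (G.lap g) y
        = -(P a g y - P b g y - (a - b) * P b (G.lap g) y)
          + (a - b) * (P a (G.lap g) y - P b (G.lap g) y) := by ring
    rw [hid]
    have htri := (abs_add_le (-(P a g y - P b g y - (a - b) * P b (G.lap g) y))
      ((a - b) * (P a (G.lap g) y - P b (G.lap g) y)))
    rw [abs_neg, abs_mul] at htri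
    refine htri.trans ?_
    have habs : |a - b| = a - b := abs_of_nonneg (by linarith)
    rw [habs] at k2 ⊢
    nlinarith [abs_nonneg (K1 * M), sq_nonneg (a - b),
      mul_nonneg (sub_nonneg.mpr hab) (sub_nonneg.mpr hab)]

lemma lap_P_comm (hP : G.IsSemigroup 0 P) {T M : ℝ} (hT : 0 ≤ T)
    (hM : ∀ v ∈ Set.Icc 0 T, ∀ y, P v (fun _ => (1:ℝ)) y ≤ M)
    {D : ℝ} (hD : ∀ y, G.deg y ≤ D)
    {g : V → ℝ} {C : ℝ} (hg : Bdd g) (hgC : ∀ z, |g z| ≤ C) :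
    ∀ s ∈ Set.Icc (0:ℝ) T, ∀ y, G.lap (P s g) y = P s (G.lap g) y := by
  obtain ⟨K, hK0, hSG⟩ := G.P_taylorSG hP hT hM hD hg hgC
  obtain ⟨hP0, hPsg, hPadd, hPsmul, hPbdd, hPcont, hPderiv, hPpos⟩ := hP
  intro s hs y
  rcases eq_or_lt_of_le hs.1 with h0 | hspos
  · rw [← h0, hP0, hP0]
  have hTpos : 0 < T := hspos.trans_le hs.2
  have d1 : HasDerivWithinAt (fun v => P v g y) (G.lap (P s g) y) (Set.Icc 0 T) s := by
    have h := hPderiv g hg y s hspos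
    simp only [Pi.zero_apply, zero_mul, sub_zero] at h
    exact h.hasDerivWithinAt
  have d2 : HasDerivWithinAt (fun v => P v g y) (P s (G.lap g) y) (Set.Icc 0 T) s := by
    apply hasDerivWithinAt_of_sq (C := K)
    intro b hb
    exact hSG s hs b hb y
  have hud : UniqueDiffWithinAt ℝ (Set.Icc (0:ℝ) T) s := (uniqueDiffOn_Icc hTpos) s hs
  exact (d1.derivWithin hud).symm.trans (d2.derivWithin hud)

set_option maxHeartbeats 800000 in
lemma sq_decomp_bound {a b l h' e K₁ C₀ Clap tt : ℝ}
    (hedef : e = a - b + h' * l) (he : |e| ≤ K₁ * h' ^ 2) (hb : |b| ≤ C₀) (hl : |l| ≤ Clap)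
    (hh : |h'| ≤ tt) (hK₁0 : 0 ≤ K₁) :
    |a * a - b * b + 2 * h' * (b * l)|
      ≤ (Clap ^ 2 + 2 * (C₀ + tt * Clap) * K₁ + K₁ ^ 2 * tt ^ 2) * h' ^ 2 := by
  have hC₀0 : 0 ≤ C₀ := (abs_nonneg b).trans hb
  have hClap0 : 0 ≤ Clap := (abs_nonneg l).trans hl
  have htt0 : 0 ≤ tt := (abs_nonneg h').trans hh
  have hid : a * a - b * b + 2 * h' * (b * l)
      = h' ^ 2 * l ^ 2 + (2 * ((b - h' * l) * e) + e ^ 2) := by rw [hedef]; ring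
  rw [hid]
  have tri : |h' ^ 2 * l ^ 2 + (2 * ((b - h' * l) * e) + e ^ 2)|
      ≤ |h' ^ 2 * l ^ 2| + (|2 * ((b - h' * l) * e)| + |e ^ 2|) :=
    (abs_add_le _ _).trans (by linarith [abs_add_le (2 * ((b - h' * l) * e)) (e ^ 2)])
  have hl2 := abs_le.mp hl
  have hh2 := abs_le.mp hh
  have he2 := abs_le.mp he
  have hb2 := abs_le.mp hb
  have hll : l ^ 2 ≤ Clap ^ 2 := by nlinarith [hl2.1, hl2.2]
  have t1 : |h' ^ 2 * l ^ 2| ≤ Clap ^ 2 * h' ^ 2 := by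
    rw [abs_of_nonneg (by positivity)]
    nlinarith [mul_le_mul_of_nonneg_left hll (sq_nonneg h')]
  have t2 : |2 * ((b - h' * l) * e)| ≤ 2 * ((C₀ + tt * Clap) * (K₁ * h' ^ 2)) := by
    rw [abs_mul, abs_mul, abs_of_nonneg (by norm_num : (0:ℝ) ≤ 2)]
    have hbl : |b - h' * l| ≤ C₀ + tt * Clap := by
      have h3 : |h' * l| ≤ tt * Clap := by
        rw [abs_mul]
        exact mul_le_mul hh hl (abs_nonneg _) htt0
      have := abs_sub b (h' * l)
      linarith
    have := mul_le_mul hbl he (abs_nonneg _) (by positivity)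
    linarith
  have t3 : |e ^ 2| ≤ K₁ ^ 2 * tt ^ 2 * h' ^ 2 := by
    rw [abs_of_nonneg (sq_nonneg e)]
    have h4 : e ^ 2 ≤ (K₁ * h' ^ 2) ^ 2 := by nlinarith [he2.1, he2.2]
    have h5 : h' ^ 2 ≤ tt ^ 2 := by nlinarith [hh2.1, hh2.2]
    calc e ^ 2 ≤ (K₁ * h' ^ 2) ^ 2 := h4
      _ = K₁ ^ 2 * (h' ^ 2 * h' ^ 2) := by ring
      _ ≤ K₁ ^ 2 * (tt ^ 2 * h' ^ 2) := mul_le_mul_of_nonneg_left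
          (mul_le_mul_of_nonneg_right h5 (sq_nonneg h')) (sq_nonneg K₁)
      _ = K₁ ^ 2 * tt ^ 2 * h' ^ 2 := by ring
  have hring : (Clap ^ 2 + 2 * (C₀ + tt * Clap) * K₁ + K₁ ^ 2 * tt ^ 2) * h' ^ 2
      = Clap ^ 2 * h' ^ 2 + (2 * ((C₀ + tt * Clap) * (K₁ * h' ^ 2)) + K₁ ^ 2 * tt ^ 2 * h' ^ 2) := by
    ring
  rw [hring]
  linarith

end Semigroup

end WGraph

open WGraph in
theorem variance_representation {V : Type*} (G : WGraph V)
    (hD : BddAbove (Set.range G.deg))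
    (P : ℝ → (V → ℝ) → V → ℝ) (hP : G.IsSemigroup 0 P)
    (f : V → ℝ) (hf : Bdd f) (t : ℝ) (ht : 0 ≤ t) (x : V) :
    (∀ s ∈ Set.Icc (0:ℝ) t, HasDerivWithinAt
        (fun u => P u (P (t - u) f * P (t - u) f) x)
        (2 * P s (G.gamma (P (t - s) f)) x) (Set.Icc (0:ℝ) t) s) ∧
    P t (f * f) x - (P t f x) ^ 2 = 2 * ∫ s in (0:ℝ)..t, P s (G.gamma (P (t - s) f)) x ∧
    0 ≤ P t (f * f) x - (P t f x) ^ 2 := by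
  obtain ⟨D, hDmem⟩ := hD
  have hDall : ∀ y, G.deg y ≤ D := fun y => hDmem ⟨y, rfl⟩
  have hP' := hP
  obtain ⟨hP0, hPsg, hPadd, hPsmul, hPbdd, hPcont, hPderiv, hPpos⟩ := hP'
  obtain ⟨M, hM1, hM⟩ := G.unif_bound hDall hP0 hPsg hPadd hPsmul hPbdd hPcont hPderiv hPpos x ht
  obtain ⟨Cf, hCf⟩ := hf
  have hf : Bdd f := ⟨Cf, hCf⟩
  have hD0 : 0 ≤ D := (G.deg_nonneg x).trans (hDall x)
  have hM0 : 0 ≤ M := by linarith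
  have hCf0 : 0 ≤ Cf := (abs_nonneg _).trans (hCf x)
  have hC₀0 : 0 ≤ Cf * M := mul_nonneg hCf0 hM0
  have hmemt : ∀ s ∈ Set.Icc (0:ℝ) t, t - s ∈ Set.Icc (0:ℝ) t :=
    fun s hs => ⟨by linarith [hs.2], by linarith [hs.1]⟩
  have hgC : ∀ u ∈ Set.Icc (0:ℝ) t, ∀ z, |P u f z| ≤ Cf * M :=
    fun u hu z => P_abs_le_const hPadd hPsmul hPpos hu.1 (hM u hu) hf hCf z
  obtain ⟨K₁, hK₁0, hTf⟩ := G.P_taylor hP ht hM hDall hf hCf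
  obtain ⟨Lf, hLf0, hLipf⟩ := G.P_lip hP ht hM hDall hf hCf
  have hClap0 : (0:ℝ) ≤ 2 * D * (Cf * M) := by positivity
  -- the main derivative statement
  have main : ∀ s₀ ∈ Set.Icc (0:ℝ) t, HasDerivWithinAt
      (fun u => P u (P (t - u) f * P (t - u) f) x)
      (2 * P s₀ (G.gamma (P (t - s₀) f)) x) (Set.Icc (0:ℝ) t) s₀ := by
    intro s₀ hs₀
    have hts₀ := hmemt s₀ hs₀
    have hg₀b : Bdd (P (t - s₀) f) := hPbdd f hf _ hts₀.1
    have hg₀C : ∀ z, |P (t - s₀) f z| ≤ Cf * M := hgC _ hts₀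
    have hlapC : ∀ z, |G.lap (P (t - s₀) f) z| ≤ 2 * D * (Cf * M) :=
      fun z => G.lap_abs_le hDall hg₀C z
    have hG₀b : Bdd (P (t - s₀) f * P (t - s₀) f) := bdd_mul hg₀b hg₀b
    have hG₀C : ∀ z, |(P (t - s₀) f * P (t - s₀) f) z| ≤ (Cf * M) * (Cf * M) := by
      intro z
      rw [Pi.mul_apply, abs_mul]
      exact mul_le_mul (hg₀C z) (hg₀C z) (abs_nonneg _) hC₀0
    have hq₀C : ∀ z, |P (t - s₀) f z * G.lap (P (t - s₀) f) z|
        ≤ (Cf * M) * (2 * D * (Cf * M)) := by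
      intro z
      rw [abs_mul]
      exact mul_le_mul (hg₀C z) (hlapC z) (abs_nonneg _) hC₀0
    have hq₀b : Bdd (fun z => P (t - s₀) f z * G.lap (P (t - s₀) f) z) := ⟨_, hq₀C⟩
    obtain ⟨K₂, hK₂0, hTG⟩ := G.P_taylor hP ht hM hDall hG₀b hG₀C
    obtain ⟨L₃, hL₃0, hLq⟩ := G.P_lip hP ht hM hDall hq₀b hq₀C
    have comm := G.lap_P_comm hP ht hM hDall hG₀b hG₀C s₀ hs₀ x
    have hval : 2 * P s₀ (G.gamma (P (t - s₀) f)) x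
        = G.lap (P s₀ (P (t - s₀) f * P (t - s₀) f)) x
          - 2 * P s₀ (fun z => P (t - s₀) f z * G.lap (P (t - s₀) f) z) x := by
      rw [comm]
      have hfun : G.lap (P (t - s₀) f * P (t - s₀) f)
          = (2:ℝ) • G.gamma (P (t - s₀) f)
            + (2:ℝ) • (fun z => P (t - s₀) f z * G.lap (P (t - s₀) f) z) := by
        funext z
        simp only [Pi.add_apply, Pi.smul_apply, smul_eq_mul]
        unfold gamma gammaB
        ring
      rw [hfun, hPadd, hPsmul, hPsmul]
      simp only [Pi.add_apply, Pi.smul_apply, smul_eq_mul]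
      ring
    apply hasDerivWithinAt_of_sq
      (C := K₂ + 2 * L₃ + ((2 * D * (Cf * M)) ^ 2
        + 2 * ((Cf * M) + t * (2 * D * (Cf * M))) * K₁ + K₁ ^ 2 * t ^ 2) * M)
    intro s hs
    have hts := hmemt s hs
    have hh : |s - s₀| ≤ t := by
      rw [abs_le]
      constructor <;> [linarith [hs.1, hs₀.2]; linarith [hs.2, hs₀.1]]
    -- first order Taylor of P (t-s) f around t-s₀
    have hE1 : ∀ z, |P (t - s) f z - P (t - s₀) f z + (s - s₀) * G.lap (P (t - s₀) f) z|
        ≤ K₁ * (s - s₀) ^ 2 := by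
      intro z
      have h := hTf (t - s₀) hts₀ (t - s) hts z
      have h4 : P (t - s) f z - P (t - s₀) f z - (t - s - (t - s₀)) * G.lap (P (t - s₀) f) z
          = P (t - s) f z - P (t - s₀) f z + (s - s₀) * G.lap (P (t - s₀) f) z := by ring
      have h5 : (t - s - (t - s₀)) ^ 2 = (s - s₀) ^ 2 := by ring
      rw [h4, h5] at h
      exact h
    -- quadratic remainder of the square
    have hE2 : ∀ z, |P (t - s) f z * P (t - s) f z
          - P (t - s₀) f z * P (t - s₀) f z
          + 2 * (s - s₀) * (P (t - s₀) f z * G.lap (P (t - s₀) f) z)|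
        ≤ ((2 * D * (Cf * M)) ^ 2 + 2 * ((Cf * M) + t * (2 * D * (Cf * M))) * K₁
            + K₁ ^ 2 * t ^ 2) * (s - s₀) ^ 2 := by
      intro z
      exact sq_decomp_bound rfl (hE1 z) (hg₀C z) (hlapC z) hh hK₁0
    -- decompose P s applied to the square
    have hfe : (P (t - s) f * P (t - s) f)
        = (P (t - s₀) f * P (t - s₀) f)
          + ((-(2 * (s - s₀))) • (fun z => P (t - s₀) f z * G.lap (P (t - s₀) f) z)
            + (fun z => P (t - s) f z * P (t - s) f z
                - P (t - s₀) f z * P (t - s₀) f z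
                + 2 * (s - s₀) * (P (t - s₀) f z * G.lap (P (t - s₀) f) z))) := by
      funext z
      simp only [Pi.mul_apply, Pi.add_apply, Pi.smul_apply, smul_eq_mul]
      ring
    have hsplit : P s (P (t - s) f * P (t - s) f) x
        = P s (P (t - s₀) f * P (t - s₀) f) x
          + ((-(2 * (s - s₀))) * P s (fun z => P (t - s₀) f z * G.lap (P (t - s₀) f) z) x
            + P s (fun z => P (t - s) f z * P (t - s) f z
                - P (t - s₀) f z * P (t - s₀) f z
                + 2 * (s - s₀) * (P (t - s₀) f z * G.lap (P (t - s₀) f) z)) x) := by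
      rw [hfe, hPadd, hPadd, hPsmul]
      simp only [Pi.add_apply, Pi.smul_apply, smul_eq_mul]
    have hPE2 : |P s (fun z => P (t - s) f z * P (t - s) f z
          - P (t - s₀) f z * P (t - s₀) f z
          + 2 * (s - s₀) * (P (t - s₀) f z * G.lap (P (t - s₀) f) z)) x|
        ≤ (((2 * D * (Cf * M)) ^ 2 + 2 * ((Cf * M) + t * (2 * D * (Cf * M))) * K₁
            + K₁ ^ 2 * t ^ 2) * (s - s₀) ^ 2) * M :=
      P_abs_le_const hPadd hPsmul hPpos hs.1 (hM s hs) ⟨_, hE2⟩ hE2 x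
    have hTG' := hTG s₀ hs₀ s hs x
    have hLq' := hLq s₀ hs₀ s hs x
    rw [hval, hsplit]
    have hid : P s (P (t - s₀) f * P (t - s₀) f) x
          + ((-(2 * (s - s₀))) * P s (fun z => P (t - s₀) f z * G.lap (P (t - s₀) f) z) x
            + P s (fun z => P (t - s) f z * P (t - s) f z
                - P (t - s₀) f z * P (t - s₀) f z
                + 2 * (s - s₀) * (P (t - s₀) f z * G.lap (P (t - s₀) f) z)) x)
          - P s₀ (P (t - s₀) f * P (t - s₀) f) x
          - (s - s₀) * (G.lap (P s₀ (P (t - s₀) f * P (t - s₀) f)) x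
            - 2 * P s₀ (fun z => P (t - s₀) f z * G.lap (P (t - s₀) f) z) x)
        = (P s (P (t - s₀) f * P (t - s₀) f) x
            - P s₀ (P (t - s₀) f * P (t - s₀) f) x
            - (s - s₀) * G.lap (P s₀ (P (t - s₀) f * P (t - s₀) f)) x)
          + ((-(2 * (s - s₀)))
              * (P s (fun z => P (t - s₀) f z * G.lap (P (t - s₀) f) z) x
                - P s₀ (fun z => P (t - s₀) f z * G.lap (P (t - s₀) f) z) x)
            + P s (fun z => P (t - s) f z * P (t - s) f z
                - P (t - s₀) f z * P (t - s₀) f z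
                + 2 * (s - s₀) * (P (t - s₀) f z * G.lap (P (t - s₀) f) z)) x) := by
      ring
    rw [hid]
    have tri1 := abs_add_le (P s (P (t - s₀) f * P (t - s₀) f) x
            - P s₀ (P (t - s₀) f * P (t - s₀) f) x
            - (s - s₀) * G.lap (P s₀ (P (t - s₀) f * P (t - s₀) f)) x)
          ((-(2 * (s - s₀)))
              * (P s (fun z => P (t - s₀) f z * G.lap (P (t - s₀) f) z) x
                - P s₀ (fun z => P (t - s₀) f z * G.lap (P (t - s₀) f) z) x)
            + P s (fun z => P (t - s) f z * P (t - s) f z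
                - P (t - s₀) f z * P (t - s₀) f z
                + 2 * (s - s₀) * (P (t - s₀) f z * G.lap (P (t - s₀) f) z)) x)
    have tri2 := abs_add_le ((-(2 * (s - s₀)))
              * (P s (fun z => P (t - s₀) f z * G.lap (P (t - s₀) f) z) x
                - P s₀ (fun z => P (t - s₀) f z * G.lap (P (t - s₀) f) z) x))
            (P s (fun z => P (t - s) f z * P (t - s) f z
                - P (t - s₀) f z * P (t - s₀) f z
                + 2 * (s - s₀) * (P (t - s₀) f z * G.lap (P (t - s₀) f) z)) x)
    have hmid : |(-(2 * (s - s₀)))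
              * (P s (fun z => P (t - s₀) f z * G.lap (P (t - s₀) f) z) x
                - P s₀ (fun z => P (t - s₀) f z * G.lap (P (t - s₀) f) z) x)|
        ≤ 2 * L₃ * (s - s₀) ^ 2 := by
      rw [abs_mul, abs_neg]
      have h6 : |2 * (s - s₀)| = 2 * |s - s₀| := by
        rw [abs_mul]; norm_num
      rw [h6]
      calc 2 * |s - s₀| * |P s (fun z => P (t - s₀) f z * G.lap (P (t - s₀) f) z) x
            - P s₀ (fun z => P (t - s₀) f z * G.lap (P (t - s₀) f) z) x|
          ≤ 2 * |s - s₀| * (L₃ * |s - s₀|) := by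
            apply mul_le_mul_of_nonneg_left hLq' (by positivity)
        _ = 2 * L₃ * (|s - s₀| * |s - s₀|) := by ring
        _ = 2 * L₃ * (s - s₀) ^ 2 := by rw [abs_mul_abs_self, sq]
    have hfinal : (K₂ + 2 * L₃ + ((2 * D * (Cf * M)) ^ 2
        + 2 * ((Cf * M) + t * (2 * D * (Cf * M))) * K₁ + K₁ ^ 2 * t ^ 2) * M) * (s - s₀) ^ 2
        = K₂ * (s - s₀) ^ 2 + 2 * L₃ * (s - s₀) ^ 2
          + (((2 * D * (Cf * M)) ^ 2 + 2 * ((Cf * M) + t * (2 * D * (Cf * M))) * K₁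
            + K₁ ^ 2 * t ^ 2) * (s - s₀) ^ 2) * M := by ring
    rw [hfinal]
    linarith
  have ρcont : ContinuousOn (fun s => P s (G.gamma (P (t - s) f)) x) (Set.Icc 0 t) := by
    intro s₀ hs₀
    have hts₀ := hmemt s₀ hs₀
    obtain ⟨Cγ, hCγ⟩ := G.bdd_gamma hDall (hPbdd f hf _ hts₀.1)
    obtain ⟨Lγ, hLγ0, hLγ⟩ := G.P_lip hP ht hM hDall
      (G.bdd_gamma hDall (hPbdd f hf _ hts₀.1)) hCγ
    have hdiff : ∀ s ∈ Set.Icc (0:ℝ) t,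
        |P s (G.gamma (P (t - s) f)) x - P s₀ (G.gamma (P (t - s₀) f)) x|
          ≤ (6 * D * (Cf * M) * Lf * M + Lγ) * |s - s₀| := by
      intro s hs
      have hts := hmemt s hs
      have hgd : ∀ z, |G.gamma (P (t - s) f) z - G.gamma (P (t - s₀) f) z|
          ≤ 6 * D * (Cf * M) * (Lf * |s - s₀|) := by
        intro z
        apply G.gamma_diff_le hDall (hgC _ hts) (hgC _ hts₀) ?_ z
        intro z'
        have h7 := hLipf (t - s₀) hts₀ (t - s) hts z'
        have h8 : |t - s - (t - s₀)| = |s - s₀| := by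
          rw [show t - s - (t - s₀) = -(s - s₀) by ring, abs_neg]
        rwa [h8] at h7
      have hsplit2 : P s (G.gamma (P (t - s) f)) x = P s (G.gamma (P (t - s₀) f)) x
          + P s (fun z => G.gamma (P (t - s) f) z - G.gamma (P (t - s₀) f) z) x := by
        have hfe2 : G.gamma (P (t - s) f) = G.gamma (P (t - s₀) f)
            + (fun z => G.gamma (P (t - s) f) z - G.gamma (P (t - s₀) f) z) := by
          funext z; simp
        conv_lhs => rw [hfe2]
        rw [hPadd]
        simp only [Pi.add_apply]
      have hPd : |P s (fun z => G.gamma (P (t - s) f) z - G.gamma (P (t - s₀) f) z) x|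
          ≤ (6 * D * (Cf * M) * (Lf * |s - s₀|)) * M :=
        P_abs_le_const hPadd hPsmul hPpos hs.1 (hM s hs) ⟨_, hgd⟩ hgd x
      have h9 := hLγ s₀ hs₀ s hs x
      rw [hsplit2]
      have hid9 : P s (G.gamma (P (t - s₀) f)) x
            + P s (fun z => G.gamma (P (t - s) f) z - G.gamma (P (t - s₀) f) z) x
            - P s₀ (G.gamma (P (t - s₀) f)) x
          = (P s (G.gamma (P (t - s₀) f)) x - P s₀ (G.gamma (P (t - s₀) f)) x)
            + P s (fun z => G.gamma (P (t - s) f) z - G.gamma (P (t - s₀) f) z) x := by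
        ring
      rw [hid9]
      calc |(P s (G.gamma (P (t - s₀) f)) x - P s₀ (G.gamma (P (t - s₀) f)) x)
            + P s (fun z => G.gamma (P (t - s) f) z - G.gamma (P (t - s₀) f) z) x|
          ≤ |P s (G.gamma (P (t - s₀) f)) x - P s₀ (G.gamma (P (t - s₀) f)) x|
            + |P s (fun z => G.gamma (P (t - s) f) z - G.gamma (P (t - s₀) f) z) x| :=
            abs_add_le _ _
        _ ≤ Lγ * |s - s₀| + (6 * D * (Cf * M) * (Lf * |s - s₀|)) * M := add_le_add h9 hPd
        _ = (6 * D * (Cf * M) * Lf * M + Lγ) * |s - s₀| := by ring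
    have htend : Filter.Tendsto (fun s => (6 * D * (Cf * M) * Lf * M + Lγ) * |s - s₀|)
        (nhdsWithin s₀ (Set.Icc 0 t)) (nhds 0) := by
      have hcont : Continuous (fun s : ℝ => (6 * D * (Cf * M) * Lf * M + Lγ) * |s - s₀|) :=
        continuous_const.mul ((continuous_id.sub continuous_const).abs)
      have h10 := hcont.tendsto s₀
      simp only [sub_self, abs_zero, mul_zero] at h10
      exact h10.mono_left nhdsWithin_le_nhds
    have h11 : Filter.Tendsto (fun s => P s (G.gamma (P (t - s) f)) x)
        (nhdsWithin s₀ (Set.Icc 0 t)) (nhds (P s₀ (G.gamma (P (t - s₀) f)) x)) := by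
      rw [tendsto_iff_dist_tendsto_zero]
      apply squeeze_zero' (Filter.Eventually.of_forall fun s => dist_nonneg) ?_ htend
      filter_upwards [self_mem_nhdsWithin] with s hs
      rw [Real.dist_eq]
      exact hdiff s hs
    exact h11
  have hcontΦ : ContinuousOn (fun u => P u (P (t - u) f * P (t - u) f) x) (Set.Icc 0 t) :=
    fun s hs => (main s hs).continuousWithinAt
  have hint : IntervalIntegrable (fun s => 2 * P s (G.gamma (P (t - s) f)) x)
      MeasureTheory.volume 0 t := by
    apply ContinuousOn.intervalIntegrable
    rw [Set.uIcc_of_le ht]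
    exact continuousOn_const.mul ρcont
  have hftc2 := intervalIntegral.integral_eq_sub_of_hasDeriv_right_of_le ht hcontΦ
    (fun s hs => ((main s ⟨hs.1.le, hs.2.le⟩).hasDerivAt
      (Icc_mem_nhds hs.1 hs.2)).hasDerivWithinAt) hint
  simp only [sub_self, sub_zero, hP0, Pi.mul_apply] at hftc2
  rw [intervalIntegral.integral_const_mul] at hftc2
  have hEq : P t (f * f) x - (P t f x) ^ 2
      = 2 * ∫ s in (0:ℝ)..t, P s (G.gamma (P (t - s) f)) x := by
    rw [sq]
    exact hftc2.symm
  refine ⟨main, hEq, ?_⟩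
  rw [hEq]
  apply mul_nonneg (by norm_num)
  apply intervalIntegral.integral_nonneg ht
  intro u hu
  exact hPpos _ (G.bdd_gamma hDall (hPbdd f hf _ (hmemt u hu).1))
    (fun z => G.gamma_nonneg _ z) u hu.1 x
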